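/- arXiv:2603.17105 — 7 statements merged into one kernel-verified Lean document; each statement's English description precedes it below -/
import Mathlib

section
/- In the setting of the inexact generalized Halpern iteration x_{n+1} = δ_n f(x_n) + α_n x_n + β_n T x_n + r_n, with p a fixed point of T and the sequence K_p^n defined by K_p^0 = max{‖x_0 − p‖, ‖f(p) − p‖/(1 − ρ), ‖p‖} and K_p^{n+1} = K_p^n + (1 − α_n − β_n − δ_n)‖p‖ + ‖r_n‖, one has ‖x_n − p‖ ≤ K_p^n and ‖f(x_n) − p‖ ≤ K_p^n for all n ∈ ℕ. -/
theorem stmt_8 {X : Type*} [NormedAddCommGroup X] [NormedSpace ℝ X]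
    (T f : X → X) (hT : ∀ x y, ‖T x - T y‖ ≤ ‖x - y‖)
    (ρ : ℝ) (hρ : 0 ≤ ρ) (hρ1 : ρ < 1)
    (hf : ∀ x y, ‖f x - f y‖ ≤ ρ * ‖x - y‖)
    (p : X) (hp : T p = p)
    (r : ℕ → X) (α β δ : ℕ → ℝ)
    (hα : ∀ n, α n ∈ Set.Icc (0:ℝ) 1) (hβ : ∀ n, β n ∈ Set.Icc (0:ℝ) 1)
    (hδ : ∀ n, δ n ∈ Set.Icc (0:ℝ) 1)
    (hsum : ∀ n, α n + β n + δ n ≤ 1)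
    (x : ℕ → X)
    (hx : ∀ n, x (n + 1) = δ n • f (x n) + α n • x n + β n • T (x n) + r n)
    (K : ℕ → ℝ)
    (hK0 : K 0 = max (max ‖x 0 - p‖ (‖f p - p‖ / (1 - ρ))) ‖p‖)
    (hKs : ∀ n, K (n + 1) = K n + (1 - α n - β n - δ n) * ‖p‖ + ‖r n‖) :
    ∀ n, ‖x n - p‖ ≤ K n ∧ ‖f (x n) - p‖ ≤ K n := by
  have hρ' : (0:ℝ) < 1 - ρ := by linarith
  have hcoef : ∀ n, 0 ≤ 1 - α n - β n - δ n := fun n => by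
    have := hsum n; linarith
  have hKmono : ∀ n, K 0 ≤ K n := by
    intro n
    induction n with
    | zero => exact le_refl _
    | succ n ih =>
      rw [hKs n]
      have h1 : 0 ≤ (1 - α n - β n - δ n) * ‖p‖ :=
        mul_nonneg (hcoef n) (norm_nonneg _)
      have h2 : 0 ≤ ‖r n‖ := norm_nonneg _
      linarith
  have hKp : ∀ n, ‖p‖ ≤ K n := fun n => by
    have := hKmono n; rw [hK0] at this
    exact le_trans (le_max_right _ _) this
  have hKnn : ∀ n, 0 ≤ K n := fun n => le_trans (norm_nonneg p) (hKp n)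
  have hfp : ∀ n, ‖f p - p‖ ≤ (1 - ρ) * K n := fun n => by
    have h0 : ‖f p - p‖ / (1 - ρ) ≤ K 0 := by
      rw [hK0]; exact le_trans (le_max_right _ _) (le_max_left _ _)
    have h := h0.trans (hKmono n)
    calc ‖f p - p‖ = ‖f p - p‖ / (1 - ρ) * (1 - ρ) := by
          rw [div_mul_cancel₀ _ hρ'.ne']
      _ ≤ K n * (1 - ρ) := mul_le_mul_of_nonneg_right h hρ'.le
      _ = (1 - ρ) * K n := mul_comm _ _
  have hstep : ∀ n, ‖x n - p‖ ≤ K n → ‖f (x n) - p‖ ≤ K n := by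
    intro n hxn
    calc ‖f (x n) - p‖ = ‖(f (x n) - f p) + (f p - p)‖ := by abel_nf
      _ ≤ ‖f (x n) - f p‖ + ‖f p - p‖ := norm_add_le _ _
      _ ≤ ρ * ‖x n - p‖ + (1 - ρ) * K n := add_le_add (hf _ _) (hfp n)
      _ ≤ ρ * K n + (1 - ρ) * K n := by
          have := mul_le_mul_of_nonneg_left hxn hρ; linarith
      _ = K n := by ring
  intro n
  induction n with
  | zero =>
    have h1 : ‖x 0 - p‖ ≤ K 0 := by
      rw [hK0]; exact le_trans (le_max_left _ _) (le_max_left _ _)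
    exact ⟨h1, hstep 0 h1⟩
  | succ n ih =>
    obtain ⟨ih1, ih2⟩ := ih
    have hTb : ‖T (x n) - T p‖ ≤ K n := le_trans (hT _ _) ih1
    have key : x (n + 1) - p = δ n • (f (x n) - p) + α n • (x n - p)
        + β n • (T (x n) - T p) + ((1 - α n - β n - δ n) • (-p) + r n) := by
      rw [hx, hp]; module
    have hδn := (hδ n).1
    have hαn := (hα n).1
    have hβn := (hβ n).1
    have hK1 : ‖x (n + 1) - p‖ ≤ K (n + 1) := by
      rw [key]
      calc ‖δ n • (f (x n) - p) + α n • (x n - p) + β n • (T (x n) - T p)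
            + ((1 - α n - β n - δ n) • (-p) + r n)‖
          ≤ ‖δ n • (f (x n) - p) + α n • (x n - p) + β n • (T (x n) - T p)‖
            + ‖(1 - α n - β n - δ n) • (-p) + r n‖ := norm_add_le _ _
        _ ≤ (‖δ n • (f (x n) - p)‖ + ‖α n • (x n - p)‖ + ‖β n • (T (x n) - T p)‖)
            + (‖(1 - α n - β n - δ n) • (-p)‖ + ‖r n‖) :=
          add_le_add (norm_add₃_le) (norm_add_le _ _)
        _ = (δ n * ‖f (x n) - p‖ + α n * ‖x n - p‖ + β n * ‖T (x n) - T p‖)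
            + ((1 - α n - β n - δ n) * ‖p‖ + ‖r n‖) := by
          simp [norm_smul, abs_of_nonneg, hδn, hαn, hβn, hcoef n,
            abs_of_nonneg (hcoef n)]
        _ ≤ (δ n * K n + α n * K n + β n * K n)
            + ((1 - α n - β n - δ n) * ‖p‖ + ‖r n‖) := by
          gcongr
        _ ≤ K n + ((1 - α n - β n - δ n) * ‖p‖ + ‖r n‖) := by
          have h : δ n * K n + α n * K n + β n * K n = (α n + β n + δ n) * K n := by ring
          rw [h]
          have := mul_le_mul_of_nonneg_right (hsum n) (hKnn n)
          linarith
        _ = K (n + 1) := by rw [hKs n]; ring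
    exact ⟨hK1, hstep _ hK1⟩
end

section
/- Let (x_n) be the inexact generalized Halpern iteration x_{n+1} = δ_n f(x_n) + α_n x_n + β_n T x_n + r_n in a normed space X, where f is a ρ-contraction (ρ ∈ [0,1)), T is nonexpansive, and (α_n), (β_n), (δ_n) ⊆ [0,1] with α_n + β_n + δ_n ≤ 1. Then for all n: ‖x_{n+2} − x_{n+1}‖ ≤ (1 − (1−ρ)δ_{n+1})‖x_{n+1} − x_n‖ + |δ_{n+1} − δ_n|·‖f(x_n)‖ + |α_{n+1} − α_n|·‖x_n‖ + |β_{n+1} − β_n|·‖T x_n‖ + ‖r_{n+1} − r_n‖. -/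
theorem stmt_9 {X : Type*} [NormedAddCommGroup X] [NormedSpace ℝ X]
    (T f : X → X) (hT : ∀ x y, ‖T x - T y‖ ≤ ‖x - y‖)
    (ρ : ℝ) (hρ : 0 ≤ ρ) (hρ1 : ρ < 1)
    (hf : ∀ x y, ‖f x - f y‖ ≤ ρ * ‖x - y‖)
    (r : ℕ → X) (α β δ : ℕ → ℝ)
    (hα : ∀ n, α n ∈ Set.Icc (0:ℝ) 1) (hβ : ∀ n, β n ∈ Set.Icc (0:ℝ) 1)
    (hδ : ∀ n, δ n ∈ Set.Icc (0:ℝ) 1)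
    (hsum : ∀ n, α n + β n + δ n ≤ 1)
    (x : ℕ → X)
    (hx : ∀ n, x (n + 1) = δ n • f (x n) + α n • x n + β n • T (x n) + r n) :
    ∀ n, ‖x (n + 2) - x (n + 1)‖ ≤
      (1 - (1 - ρ) * δ (n + 1)) * ‖x (n + 1) - x n‖
      + |δ (n + 1) - δ n| * ‖f (x n)‖ + |α (n + 1) - α n| * ‖x n‖
      + |β (n + 1) - β n| * ‖T (x n)‖ + ‖r (n + 1) - r n‖ := by
  intro n
  have key : x (n + 2) - x (n + 1) =
      δ (n + 1) • (f (x (n + 1)) - f (x n)) + (δ (n + 1) - δ n) • f (x n)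
      + α (n + 1) • (x (n + 1) - x n) + (α (n + 1) - α n) • x n
      + β (n + 1) • (T (x (n + 1)) - T (x n)) + (β (n + 1) - β n) • T (x n)
      + (r (n + 1) - r n) := by
    have h1 := hx n
    have h2 := hx (n + 1)
    rw [show n + 2 = n + 1 + 1 from rfl, h2, h1]
    simp only [smul_sub, sub_smul, smul_add]
    abel
  rw [key]
  have hd := hδ (n + 1)
  have ha := hα (n + 1)
  have hb := hβ (n + 1)
  have hdn := ‖x (n + 1) - x n‖
  have hnorm : ∀ a b : X, ‖a + b‖ ≤ ‖a‖ + ‖b‖ := norm_add_le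
  calc ‖δ (n + 1) • (f (x (n + 1)) - f (x n)) + (δ (n + 1) - δ n) • f (x n)
      + α (n + 1) • (x (n + 1) - x n) + (α (n + 1) - α n) • x n
      + β (n + 1) • (T (x (n + 1)) - T (x n)) + (β (n + 1) - β n) • T (x n)
      + (r (n + 1) - r n)‖
      ≤ ‖δ (n + 1) • (f (x (n + 1)) - f (x n))‖ + ‖(δ (n + 1) - δ n) • f (x n)‖
      + ‖α (n + 1) • (x (n + 1) - x n)‖ + ‖(α (n + 1) - α n) • x n‖
      + ‖β (n + 1) • (T (x (n + 1)) - T (x n))‖ + ‖(β (n + 1) - β n) • T (x n)‖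
      + ‖r (n + 1) - r n‖ := by
        refine le_trans (norm_add_le _ _) ?_
        gcongr
        refine le_trans (norm_add_le _ _) ?_
        gcongr
        refine le_trans (norm_add_le _ _) ?_
        gcongr
        refine le_trans (norm_add_le _ _) ?_
        gcongr
        refine le_trans (norm_add_le _ _) ?_
        gcongr
        exact norm_add_le _ _
    _ ≤ (1 - (1 - ρ) * δ (n + 1)) * ‖x (n + 1) - x n‖
      + |δ (n + 1) - δ n| * ‖f (x n)‖ + |α (n + 1) - α n| * ‖x n‖
      + |β (n + 1) - β n| * ‖T (x n)‖ + ‖r (n + 1) - r n‖ := by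
        simp only [norm_smul, Real.norm_eq_abs]
        rw [abs_of_nonneg hd.1, abs_of_nonneg ha.1, abs_of_nonneg hb.1]
        have h1 : ‖f (x (n + 1)) - f (x n)‖ ≤ ρ * ‖x (n + 1) - x n‖ := hf _ _
        have h2 : ‖T (x (n + 1)) - T (x n)‖ ≤ ‖x (n + 1) - x n‖ := hT _ _
        have h3 : α (n + 1) + β (n + 1) + δ (n + 1) ≤ 1 := hsum (n + 1)
        have h4 : (0:ℝ) ≤ ‖x (n + 1) - x n‖ := norm_nonneg _
        nlinarith [mul_le_mul_of_nonneg_left h1 hd.1,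
          mul_le_mul_of_nonneg_left h2 hb.1,
          mul_nonneg hd.1 hρ]
end

section
/- Let (s_n), (c_n) be sequences of nonnegative reals and (a_n) ⊆ [0,1] with s_{n+1} ≤ (1 − a_n)s_n + c_n for all n. Suppose L ∈ ℕ* bounds (s_n), ∑ c_n converges with Cauchy modulus χ, and A : ℕ × ℕ → ℕ satisfies A(m,k) ≥ m and ∏_{i=m}^{A(m,k)}(1 − a_i) ≤ 1/(k+1) for all m, k. Then lim s_n = 0 with rate of convergence Σ*(k) = A(χ(2k+1)+1, 2L(k+1) − 1) + 1, i.e., s_n ≤ 1/(k+1) for all n ≥ Σ*(k). -/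
/-! Unfolding the recursion from `m` to `n` gives
`s n ≤ (∏_{m ≤ i < n} (1 - a i)) * s m + ∑_{m ≤ i < n} c i`.
Starting at `m = χ(2k+1) + 1`, the Cauchy modulus bounds the sum by `1/(2(k+1))`, and once
`n > A(m, 2L(k+1) - 1)` the product is at most `1/(2L(k+1))`, so the first term is at most
`L/(2L(k+1)) = 1/(2(k+1))` as well. -/

open Finset

section Recursion

variable {a c : ℕ → ℝ}

lemma prod_one_sub_nonneg (ha : ∀ n, a n ∈ Set.Icc (0 : ℝ) 1) (t : Finset ℕ) :
    0 ≤ ∏ i ∈ t, (1 - a i) :=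
  prod_nonneg fun i _ => sub_nonneg.2 (ha i).2

lemma prod_one_sub_antitone (ha : ∀ n, a n ∈ Set.Icc (0 : ℝ) 1) :
    Antitone fun t : Finset ℕ => ∏ i ∈ t, (1 - a i) :=
  prod_anti_set_of_le_one (fun i => sub_nonneg.2 (ha i).2) (fun i => sub_le_self _ (ha i).1)

lemma le_prod_one_sub_mul_add_sum {s : ℕ → ℝ} (hc : ∀ n, 0 ≤ c n)
    (ha : ∀ n, a n ∈ Set.Icc (0 : ℝ) 1) (hrec : ∀ n, s (n + 1) ≤ (1 - a n) * s n + c n)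
    {m n : ℕ} (hmn : m ≤ n) :
    s n ≤ (∏ i ∈ Ico m n, (1 - a i)) * s m + ∑ i ∈ Ico m n, c i := by
  induction n, hmn using Nat.le_induction with
  | base => simp
  | succ n hmn ih =>
    rw [prod_Ico_succ_top hmn, sum_Ico_succ_top hmn]
    have hS : 0 ≤ ∑ i ∈ Ico m n, c i := sum_nonneg fun i _ => hc i
    obtain ⟨ha0, ha1⟩ := ha n
    calc s (n + 1) ≤ (1 - a n) * s n + c n := hrec n
      _ ≤ (1 - a n) * ((∏ i ∈ Ico m n, (1 - a i)) * s m + ∑ i ∈ Ico m n, c i) + c n := by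
          gcongr
      _ ≤ (∏ i ∈ Ico m n, (1 - a i)) * (1 - a n) * s m + (∑ i ∈ Ico m n, c i + c n) := by
          nlinarith

end Recursion

lemma sum_Ico_le_of_cauchy_modulus {c : ℕ → ℝ} {χ : ℕ → ℕ} (k : ℕ)
    (hχ : ∀ n, χ k ≤ n → ∀ l : ℕ, 1 ≤ l → ∑ i ∈ Icc (n + 1) (n + l), c i ≤ 1 / (k + 1))
    (n : ℕ) : ∑ i ∈ Ico (χ k + 1) n, c i ≤ 1 / (k + 1) := by
  rcases le_or_gt n (χ k + 1) with hn | hn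
  · rw [Ico_eq_empty_of_le hn, sum_empty]
    positivity
  · obtain ⟨l, rfl⟩ := Nat.exists_eq_add_of_lt hn
    have hIcc : Ico (χ k + 1) (χ k + 1 + l + 1) = Icc (χ k + 1) (χ k + (l + 1)) := by
      rw [← Ico_add_one_right_eq_Icc]; congr 1; omega
    exact hIcc ▸ hχ _ le_rfl (l + 1) (Nat.le_add_left 1 l)

lemma natCast_div_two_mul_sub_one_add_one_le (L k : ℕ) :
    (L : ℝ) / (((2 * L * (k + 1) - 1 : ℕ) : ℝ) + 1) ≤ 1 / (2 * (k + 1)) := by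
  rcases Nat.eq_zero_or_pos L with rfl | hL
  · simp only [CharP.cast_eq_zero, zero_div]
    positivity
  · have hpos : 1 ≤ 2 * L * (k + 1) := Nat.succ_le_of_lt (by positivity)
    rw [← Nat.cast_add_one, Nat.sub_add_cancel hpos]
    push_cast
    rw [div_le_div_iff₀ (by positivity) (by positivity)]
    nlinarith

theorem stmt_11_general (s c : ℕ → ℝ) (hc : ∀ n, 0 ≤ c n)
    (a : ℕ → ℝ) (ha : ∀ n, a n ∈ Set.Icc (0:ℝ) 1)
    (hrec : ∀ n, s (n + 1) ≤ (1 - a n) * s n + c n)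
    (L : ℕ) (hLb : ∀ n, s n ≤ L)
    (χ : ℕ → ℕ)
    (hχ : ∀ k n, χ k ≤ n → ∀ l : ℕ, 1 ≤ l →
      ∑ i ∈ Finset.Icc (n + 1) (n + l), c i ≤ 1 / (k + 1))
    (A : ℕ → ℕ → ℕ)
    (hA : ∀ m k, m ≤ A m k ∧ ∏ i ∈ Finset.Icc m (A m k), (1 - a i) ≤ 1 / (k + 1)) :
    ∀ k n, A (χ (2 * k + 1) + 1) (2 * L * (k + 1) - 1) + 1 ≤ n →
      s n ≤ 1 / (k + 1) := by
  intro k n hn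
  set m := χ (2 * k + 1) + 1
  set K := 2 * L * (k + 1) - 1
  obtain ⟨hmA, hprodA⟩ := hA m K
  have hprod : ∏ i ∈ Ico m n, (1 - a i) ≤ 1 / (K + 1) :=
    (prod_one_sub_antitone ha (Icc_subset_Ico_right hn)).trans hprodA
  have hsum : ∑ i ∈ Ico m n, c i ≤ 1 / (2 * (k + 1)) := by
    convert sum_Ico_le_of_cauchy_modulus (2 * k + 1) (hχ _) n using 2
    push_cast; ring
  have hterm : (∏ i ∈ Ico m n, (1 - a i)) * s m ≤ 1 / (2 * (k + 1)) :=
    calc (∏ i ∈ Ico m n, (1 - a i)) * s m ≤ (∏ i ∈ Ico m n, (1 - a i)) * L :=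
          mul_le_mul_of_nonneg_left (hLb m) (prod_one_sub_nonneg ha _)
      _ ≤ 1 / (K + 1) * L := mul_le_mul_of_nonneg_right hprod L.cast_nonneg
      _ ≤ 1 / (2 * (k + 1)) := by rw [one_div_mul_eq_div]; exact natCast_div_two_mul_sub_one_add_one_le L k
  calc s n ≤ (∏ i ∈ Ico m n, (1 - a i)) * s m + ∑ i ∈ Ico m n, c i :=
        le_prod_one_sub_mul_add_sum hc ha hrec (by omega)
    _ ≤ 1 / (2 * (k + 1)) + 1 / (2 * (k + 1)) := add_le_add hterm hsum
    _ = 1 / (k + 1) := by field_simp; norm_num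

theorem stmt_11 (s c : ℕ → ℝ) (hs : ∀ n, 0 ≤ s n) (hc : ∀ n, 0 ≤ c n)
    (a : ℕ → ℝ) (ha : ∀ n, a n ∈ Set.Icc (0:ℝ) 1)
    (hrec : ∀ n, s (n + 1) ≤ (1 - a n) * s n + c n)
    (L : ℕ) (hL : 1 ≤ L) (hLb : ∀ n, s n ≤ L)
    (hcsum : Summable c)
    (χ : ℕ → ℕ)
    (hχ : ∀ k n, χ k ≤ n → ∀ l : ℕ, 1 ≤ l →
      ∑ i ∈ Finset.Icc (n + 1) (n + l), c i ≤ 1 / (k + 1))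
    (A : ℕ → ℕ → ℕ)
    (hA : ∀ m k, m ≤ A m k ∧ ∏ i ∈ Finset.Icc m (A m k), (1 - a i) ≤ 1 / (k + 1)) :
    ∀ k n, A (χ (2 * k + 1) + 1) (2 * L * (k + 1) - 1) + 1 ≤ n →
      s n ≤ 1 / (k + 1) :=
  stmt_11_general s c hc a ha hrec L hLb χ hχ A hA
end

section
/- Let ρ ∈ [0,1), J a positive integer, and δ_n = 1/(n + J) for all n ∈ ℕ. Define σ₁*(m,k) = ⌈(m + J + 1)(k+1)^{1/(1−ρ)}⌉ − J − 1. Then for all m, k ∈ ℕ, σ₁*(m,k) ≥ m and ∏_{i=m}^{σ₁*(m,k)} (1 − (1−ρ)/(i + J + 1)) ≤ 1/(k+1). -/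
/-!
Write `α = 1 - ρ ∈ (0, 1]`. By Bernoulli's inequality for the exponent `α`, every factor satisfies
`1 - α / x ≤ (x / (x + 1)) ^ α`, so the product from `m` to `N` is at most the `α`-th power of the
telescoping product `(m + J + 1) / (N + J + 2)`. The ceiling in `σ₁*(m, k) = N` makes
`N + J + 2 ≥ (m + J + 1) (k + 1) ^ (1 / α)`, and raising to the power `α` gives `1 / (k + 1)`.
-/

open Finset Real

lemma prod_Icc_div_succ {K : Type*} [Field K] {f : ℕ → K} (hf : ∀ i, f i ≠ 0) {m n : ℕ}
    (hmn : m ≤ n) : ∏ i ∈ Icc m n, f i / f (i + 1) = f m / f (n + 1) := by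
  induction n, hmn using Nat.le_induction with
  | base => simp
  | succ n hmn ih =>
    rw [prod_Icc_succ_top (by omega), ih]
    field_simp [hf]

lemma one_sub_mul_le_inv_one_add_rpow {α t : ℝ} (hα0 : 0 ≤ α) (hα1 : α ≤ 1) (ht : 0 ≤ t) :
    1 - α * t ≤ ((1 + t) ^ α)⁻¹ := by
  have hpos : 0 < (1 + t) ^ α := by positivity
  rcases le_or_gt (1 - α * t) 0 with hneg | hnonneg
  · exact hneg.trans (inv_pos.mpr hpos).le
  have bernoulli : (1 + t) ^ α ≤ 1 + α * t :=
    rpow_one_add_le_one_add_mul_self (by linarith) hα0 hα1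
  rw [← one_div, le_div_iff₀ hpos]
  calc (1 - α * t) * (1 + t) ^ α ≤ (1 - α * t) * (1 + α * t) := by gcongr
    _ ≤ 1 := by nlinarith [sq_nonneg (α * t)]

lemma one_sub_div_le_div_add_one_rpow {α x : ℝ} (hα0 : 0 ≤ α) (hα1 : α ≤ 1) (hx : 0 < x) :
    1 - α / x ≤ (x / (x + 1)) ^ α := by
  have hx' : x / (x + 1) = (1 + 1 / x)⁻¹ := by field_simp
  rw [hx', inv_rpow (by positivity), div_eq_mul_one_div]
  exact one_sub_mul_le_inv_one_add_rpow hα0 hα1 (by positivity)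

lemma prod_Icc_one_sub_div_add_le {α c : ℝ} (hα0 : 0 ≤ α) (hα1 : α ≤ 1) (hc : 1 ≤ c) {m n : ℕ}
    (hmn : m ≤ n) : ∏ i ∈ Icc m n, (1 - α / (i + c)) ≤ ((m + c) / (n + 1 + c)) ^ α := by
  have hf : ∀ i : ℕ, ((i : ℝ) + c) ≠ 0 := fun i => by positivity
  calc ∏ i ∈ Icc m n, (1 - α / (i + c))
      ≤ ∏ i ∈ Icc m n, (((i : ℝ) + c) / ((i + 1 : ℕ) + c)) ^ α := by
        refine prod_le_prod (fun i _ => ?_) (fun i _ => ?_)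
        · have : α / (i + c) ≤ 1 := by
            rw [div_le_one (by positivity)]
            linarith [(Nat.cast_nonneg i : (0 : ℝ) ≤ i)]
          linarith
        · push_cast
          rw [add_right_comm (i : ℝ) 1 c]
          exact one_sub_div_le_div_add_one_rpow hα0 hα1 (by positivity)
    _ = (∏ i ∈ Icc m n, ((i : ℝ) + c) / ((i + 1 : ℕ) + c)) ^ α :=
        finsetProd_rpow _ _ (fun i _ => by positivity) α
    _ = ((m + c) / (n + 1 + c)) ^ α := by
        rw [prod_Icc_div_succ (f := fun i : ℕ => (i : ℝ) + c) hf hmn]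
        push_cast
        rfl

lemma le_natCeil_sub_sub_one {x : ℝ} {a b : ℕ} (h : (a : ℝ) + b + 1 ≤ x) :
    a ≤ ⌈x⌉₊ - b - 1 ∧ x ≤ ((⌈x⌉₊ - b - 1 : ℕ) : ℝ) + 1 + (b + 1) := by
  have hceil : a + b + 1 ≤ ⌈x⌉₊ := by
    rw [← Nat.cast_le (α := ℝ)]
    push_cast
    exact h.trans (Nat.le_ceil x)
  refine ⟨by omega, ?_⟩
  rw [Nat.cast_sub (by omega), Nat.cast_sub (by omega), Nat.cast_one]
  linarith [Nat.le_ceil x]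

theorem stmt_13_general (ρ : ℝ) (hρ : 0 ≤ ρ) (hρ1 : ρ < 1) (J : ℕ) :
    ∀ m k : ℕ,
      m ≤ ⌈((m : ℝ) + J + 1) * ((k : ℝ) + 1) ^ ((1 : ℝ) / (1 - ρ))⌉₊ - J - 1 ∧
      ∏ i ∈ Finset.Icc m (⌈((m : ℝ) + J + 1) * ((k : ℝ) + 1) ^ ((1 : ℝ) / (1 - ρ))⌉₊ - J - 1),
        (1 - (1 - ρ) / ((i : ℝ) + J + 1)) ≤ 1 / (k + 1) := by
  intro m k
  set α := 1 - ρ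
  set K := ((k : ℝ) + 1) ^ ((1 : ℝ) / α)
  set N := ⌈((m : ℝ) + J + 1) * K⌉₊ - J - 1
  have hα0 : 0 < α := by linarith
  have hK : 1 ≤ K := one_le_rpow (by linarith [(Nat.cast_nonneg k : (0 : ℝ) ≤ k)]) (by positivity)
  obtain ⟨hmN, hN⟩ := le_natCeil_sub_sub_one (a := m) (b := J)
    (le_mul_of_one_le_right (by positivity) hK)
  refine ⟨hmN, ?_⟩
  calc ∏ i ∈ Icc m N, (1 - α / ((i : ℝ) + J + 1))
      = ∏ i ∈ Icc m N, (1 - α / ((i : ℝ) + (J + 1))) := by simp only [add_assoc]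
    _ ≤ ((m + (J + 1)) / (N + 1 + (J + 1))) ^ α :=
        prod_Icc_one_sub_div_add_le hα0.le (by linarith) (by simp) hmN
    _ ≤ ((m + (J + 1)) / ((m + J + 1) * K)) ^ α := by gcongr
    _ = 1 / (k + 1) := by
        rw [← add_assoc, div_mul_cancel_left₀ (by positivity), inv_rpow (by positivity),
          ← rpow_mul (by positivity), one_div_mul_cancel hα0.ne', rpow_one, one_div]

theorem stmt_13 (ρ : ℝ) (hρ : 0 ≤ ρ) (hρ1 : ρ < 1) (J : ℕ) (hJ : 1 ≤ J) :
    ∀ m k : ℕ,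
      m ≤ ⌈((m : ℝ) + J + 1) * ((k : ℝ) + 1) ^ ((1 : ℝ) / (1 - ρ))⌉₊ - J - 1 ∧
      ∏ i ∈ Finset.Icc m (⌈((m : ℝ) + J + 1) * ((k : ℝ) + 1) ^ ((1 : ℝ) / (1 - ρ))⌉₊ - J - 1),
        (1 - (1 - ρ) / ((i : ℝ) + J + 1)) ≤ 1 / (k + 1) :=
  stmt_13_general ρ hρ hρ1 J
end

section
/- Let (δ_n) ⊆ [0,1], ρ ∈ [0,1), and suppose ∑ δ_n diverges with rate of divergence σ₁. Define σ₁⁺(n) = max{σ₁(i) : 0 ≤ i ≤ n} and θ(n) = max(σ₁⁺(⌈n/(1−ρ)⌉ + 1) − 1, 0). Then ∑_{i=0}^{θ(n)} (1−ρ)δ_{i+1} ≥ n for all n, i.e., θ is a rate of divergence of ∑_n (1−ρ)δ_{n+1}. -/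
/-!
Three closure properties of rates of divergence compose to give `θ`: replacing a rate by its
running maximum keeps it a rate when the terms are nonnegative; dropping the first term
`a₀ ≤ 1` turns a rate `σ` into `n ↦ σ (n + 1) ∸ 1`; and scaling the terms by `c > 0` turns a
rate `σ` into `n ↦ σ ⌈n / c⌉`.
-/

open Finset

def IsRateOfDivergence (a : ℕ → ℝ) (σ : ℕ → ℕ) : Prop :=
  ∀ n : ℕ, (n : ℝ) ≤ ∑ i ∈ range (σ n + 1), a i

namespace IsRateOfDivergence

variable {a : ℕ → ℝ} {σ : ℕ → ℕ}

theorem runningSup (ha : 0 ≤ a) (hσ : IsRateOfDivergence a σ) :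
    IsRateOfDivergence a fun n => (range (n + 1)).sup σ := fun n =>
  (hσ n).trans <| sum_mono_set_of_nonneg ha <| range_mono <|
    Nat.succ_le_succ <| le_sup <| self_mem_range_succ n

theorem shift (ha : 0 ≤ a) (ha₀ : a 0 ≤ 1) (hσ : IsRateOfDivergence a σ) :
    IsRateOfDivergence (fun i => a (i + 1)) fun n => σ (n + 1) - 1 := by
  intro n
  have hle : ∑ i ∈ range (σ (n + 1) + 1), a i ≤ ∑ i ∈ range (σ (n + 1) - 1 + 1 + 1), a i :=
    sum_mono_set_of_nonneg ha <| range_mono <| by omega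
  have h := (hσ (n + 1)).trans hle
  rw [sum_range_succ'] at h
  push_cast at h
  linarith

theorem smul {c : ℝ} (hc : 0 < c) (hσ : IsRateOfDivergence a σ) :
    IsRateOfDivergence (fun i => c * a i) fun n => σ ⌈(n : ℝ) / c⌉₊ := by
  intro n
  rw [← mul_sum]
  calc (n : ℝ) = c * (n / c) := by field_simp
    _ ≤ c * ⌈(n : ℝ) / c⌉₊ := by gcongr; exact Nat.le_ceil _
    _ ≤ _ := by gcongr; exact hσ _

end IsRateOfDivergence

theorem stmt_16_general (δ : ℕ → ℝ) (hδ : ∀ n, δ n ∈ Set.Icc (0:ℝ) 1)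
    (ρ : ℝ) (hρ1 : ρ < 1)
    (σ₁ : ℕ → ℕ) (hσ₁ : ∀ n : ℕ, (n : ℝ) ≤ ∑ i ∈ Finset.range (σ₁ n + 1), δ i) :
    ∀ n : ℕ,
      (n : ℝ) ≤ ∑ i ∈ Finset.range
        (((Finset.range (⌈(n : ℝ) / (1 - ρ)⌉₊ + 1 + 1)).sup σ₁ - 1) + 1),
        (1 - ρ) * δ (i + 1) := by
  have hδ₀ : 0 ≤ δ := fun i => (hδ i).1
  exact ((IsRateOfDivergence.runningSup hδ₀ hσ₁).shift hδ₀ (hδ 0).2).smul (sub_pos.mpr hρ1)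

theorem stmt_16 (δ : ℕ → ℝ) (hδ : ∀ n, δ n ∈ Set.Icc (0:ℝ) 1)
    (ρ : ℝ) (hρ : 0 ≤ ρ) (hρ1 : ρ < 1)
    (σ₁ : ℕ → ℕ) (hσ₁ : ∀ n : ℕ, (n : ℝ) ≤ ∑ i ∈ Finset.range (σ₁ n + 1), δ i) :
    ∀ n : ℕ,
      (n : ℝ) ≤ ∑ i ∈ Finset.range
        (((Finset.range (⌈(n : ℝ) / (1 - ρ)⌉₊ + 1 + 1)).sup σ₁ - 1) + 1),
        (1 - ρ) * δ (i + 1) :=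
  stmt_16_general δ hδ ρ hρ1 σ₁ hσ₁
end

section
/- Let L > 0 be real, J ≥ N ≥ 2 integers, γ ∈ (0,1], a_n = N/(γ(n+J)), and (c_n) a real sequence with c_n ≤ L for all n. Let (s_n) be a sequence of nonnegative reals with s_0 ≤ L and s_{n+1} ≤ (1 − γ a_{n+1}) s_n + (a_n − a_{n+1}) c_n for all n. Then s_n ≤ JL/(γ(n+J)) for all n ∈ ℕ. -/
theorem stmt_17 (L : ℝ) (hL : 0 < L) (J N : ℕ) (hN : 2 ≤ N) (hJN : N ≤ J)
    (γ : ℝ) (hγ : 0 < γ) (hγ1 : γ ≤ 1)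
    (a : ℕ → ℝ) (ha : ∀ n, a n = N / (γ * (n + J)))
    (c : ℕ → ℝ) (hc : ∀ n, c n ≤ L)
    (s : ℕ → ℝ) (hs : ∀ n, 0 ≤ s n) (hs0 : s 0 ≤ L)
    (hrec : ∀ n, s (n + 1) ≤ (1 - γ * a (n + 1)) * s n + (a n - a (n + 1)) * c n) :
    ∀ n, s n ≤ J * L / (γ * (n + J)) := by
  have hN2 : (2:ℝ) ≤ N := by exact_mod_cast hN
  have hNJ : (N:ℝ) ≤ J := by exact_mod_cast hJN
  intro n
  induction n with
  | zero =>
      have hJ0 : (0:ℝ) < J := by linarith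
      rw [le_div_iff₀ (by positivity)]
      push_cast
      nlinarith [hs 0, mul_pos hL hJ0, mul_le_mul_of_nonneg_right hs0 (mul_pos hγ hJ0).le]
  | succ n ih =>
      have hn0 : (0:ℝ) ≤ (n:ℝ) := Nat.cast_nonneg n
      have hx : (0:ℝ) < (n:ℝ) + J := by linarith
      have hy : (0:ℝ) < (n:ℝ) + 1 + J := by positivity
      have h1 := hrec n
      rw [ha n, ha (n+1)] at h1
      push_cast at h1 ⊢
      have hxy : γ * ((n:ℝ) + J) ≤ γ * ((n:ℝ) + 1 + J) := by nlinarith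
      have hcoef : 0 ≤ (N:ℝ) / (γ * ((n:ℝ) + J)) - N / (γ * ((n:ℝ) + 1 + J)) := by
        rw [sub_nonneg, div_le_div_iff₀ (by positivity) (by positivity)]
        nlinarith
      have h3 : ((N:ℝ) / (γ * ((n:ℝ) + J)) - N / (γ * ((n:ℝ) + 1 + J))) * c n ≤
          ((N:ℝ) / (γ * ((n:ℝ) + J)) - N / (γ * ((n:ℝ) + 1 + J))) * L :=
        mul_le_mul_of_nonneg_left (hc n) hcoef
      have hcoef2 : 0 ≤ 1 - γ * ((N:ℝ) / (γ * ((n:ℝ) + 1 + J))) := by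
        have : γ * ((N:ℝ) / (γ * ((n:ℝ) + 1 + J))) = N / ((n:ℝ) + 1 + J) := by
          field_simp
        rw [this, sub_nonneg, div_le_one hy]
        linarith
      have h2 : (1 - γ * ((N:ℝ) / (γ * ((n:ℝ) + 1 + J)))) * s n ≤
          (1 - γ * ((N:ℝ) / (γ * ((n:ℝ) + 1 + J)))) * (J * L / (γ * ((n:ℝ) + J))) :=
        mul_le_mul_of_nonneg_left ih hcoef2
      have h4 : (1 - γ * ((N:ℝ) / (γ * ((n:ℝ) + 1 + J)))) * (J * L / (γ * ((n:ℝ) + J)))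
          + ((N:ℝ) / (γ * ((n:ℝ) + J)) - N / (γ * ((n:ℝ) + 1 + J))) * L
          ≤ J * L / (γ * ((n:ℝ) + 1 + J)) := by
        rw [← sub_nonneg]
        have key : (J:ℝ) * L / (γ * ((n:ℝ) + 1 + J)) -
            ((1 - γ * ((N:ℝ) / (γ * ((n:ℝ) + 1 + J)))) * (J * L / (γ * ((n:ℝ) + J)))
            + ((N:ℝ) / (γ * ((n:ℝ) + J)) - N / (γ * ((n:ℝ) + 1 + J))) * L)
            = (L * ((N:ℝ) * J - J - N)) / (γ * ((n:ℝ) + J) * ((n:ℝ) + 1 + J)) := by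
          field_simp
          ring
        rw [key]
        have hkey : (J:ℝ) + N ≤ N * J := by nlinarith
        apply div_nonneg (by nlinarith) (by positivity)
      linarith
end

section
/- Let X be a normed space, T : X → X nonexpansive with fixed point p, f : X → X a ρ-contraction (ρ ∈ [0,1)), and (x_n) defined by x_{n+1} = δ_n f(x_n) + (1 − δ_n) T x_n where δ_n ∈ [0,1]. Assume ∑|δ_n − δ_{n+1}| < ∞, lim δ_n = 0, and ∑ δ_n = ∞. Then lim ‖x_{n+1} − x_n‖ = 0 and lim ‖x_n − T x_n‖ = 0. -/
/-!
Writing `a n = ‖x (n + 1) - x n‖`, the two contractive pieces of the scheme give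
`a (n + 1) ≤ (1 - (1 - ρ) δ (n + 1)) a n + |δ (n + 1) - δ n| C`, where `C` bounds
`‖f (x n) - T (x n)‖` because the iterates stay in a ball around `p`. Since `∑ δ n = ∞` and
`∑ |δ n - δ (n + 1)| < ∞`, Xu's lemma gives `a n → 0`. Finally
`x (n + 1) - T (x n) = δ n • (f (x n) - T (x n))`, so `‖x n - T (x n)‖ ≤ a n + δ n C → 0`.
-/

open Filter Finset Topology

section XuLemma

variable {a b γ : ℕ → ℝ}

lemma le_prod_one_sub_mul_add_sum_s19 (hb : ∀ n, 0 ≤ b n) (hγ0 : ∀ n, 0 ≤ γ n)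
    (hγ1 : ∀ n, γ n ≤ 1) (hrec : ∀ n, a (n + 1) ≤ (1 - γ n) * a n + b n)
    {n m : ℕ} (hnm : n ≤ m) :
    a m ≤ (∏ k ∈ Ico n m, (1 - γ k)) * a n + ∑ k ∈ Ico n m, b k := by
  induction m, hnm using Nat.le_induction with
  | base => simp
  | succ m hnm ih =>
    have hS : 0 ≤ ∑ k ∈ Ico n m, b k := sum_nonneg fun k _ => hb k
    rw [prod_Ico_succ_top hnm, sum_Ico_succ_top hnm]
    nlinarith [mul_le_mul_of_nonneg_left ih (sub_nonneg.2 (hγ1 m)), hrec m, hγ0 m]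

lemma tendsto_prod_Ico_one_sub_atTop_zero (hγ0 : ∀ n, 0 ≤ γ n) (hγ1 : ∀ n, γ n ≤ 1)
    (hγ : ¬ Summable γ) (N : ℕ) :
    Tendsto (fun m => ∏ k ∈ Ico N m, (1 - γ k)) atTop (𝓝 0) := by
  have hsum : Tendsto (fun m => ∑ k ∈ Ico N m, γ k) atTop atTop := by
    have hpartial := (not_summable_iff_tendsto_nat_atTop_of_nonneg hγ0).mp hγ
    refine (tendsto_atTop_add_const_right _ (-∑ k ∈ range N, γ k) hpartial).congr' ?_
    filter_upwards [eventually_ge_atTop N] with m hm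
    rw [sum_Ico_eq_sub _ hm, sub_eq_add_neg]
  have hexp : Tendsto (fun m => Real.exp (-∑ k ∈ Ico N m, γ k)) atTop (𝓝 0) :=
    Real.tendsto_exp_atBot.comp (tendsto_neg_atTop_atBot.comp hsum)
  refine squeeze_zero (fun m => prod_nonneg fun k _ => sub_nonneg.2 (hγ1 k)) (fun m => ?_) hexp
  rw [← sum_neg_distrib, Real.exp_sum]
  exact prod_le_prod (fun k _ => sub_nonneg.2 (hγ1 k))
    fun k _ => by linarith [Real.add_one_le_exp (-γ k)]

/-- Xu's lemma. -/
theorem tendsto_zero_of_le_one_sub_mul_add (ha : ∀ n, 0 ≤ a n) (hb : ∀ n, 0 ≤ b n)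
    (hγ0 : ∀ n, 0 ≤ γ n) (hγ1 : ∀ n, γ n ≤ 1)
    (hrec : ∀ n, a (n + 1) ≤ (1 - γ n) * a n + b n)
    (hbs : Summable b) (hγ : ¬ Summable γ) :
    Tendsto a atTop (𝓝 0) := by
  refine tendsto_order.2 ⟨fun ε hε => Eventually.of_forall fun m => hε.trans_le (ha m),
    fun ε hε => ?_⟩
  obtain ⟨N, hN⟩ := ((tendsto_order.1 (tendsto_sum_nat_add b)).2 (ε / 2) (half_pos hε)).exists
  have hprod := (tendsto_prod_Ico_one_sub_atTop_zero hγ0 hγ1 hγ N).mul_const (a N)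
  rw [zero_mul] at hprod
  filter_upwards [eventually_ge_atTop N, (tendsto_order.1 hprod).2 (ε / 2) (half_pos hε)]
    with m hm hsmall
  have htail : ∑ k ∈ Ico N m, b k ≤ ∑' k, b (k + N) := by
    simp_rw [sum_Ico_eq_sum_range, add_comm N]
    exact ((summable_nat_add_iff N).2 hbs).sum_le_tsum _ fun k _ => hb _
  linarith [le_prod_one_sub_mul_add_sum_s19 hb hγ0 hγ1 hrec hm]

end XuLemma

lemma norm_smul_add_one_sub_smul_le {X : Type*} [NormedAddCommGroup X] [NormedSpace ℝ X]
    {t : ℝ} (ht : t ∈ Set.Icc (0 : ℝ) 1) (u v : X) :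
    ‖t • u + (1 - t) • v‖ ≤ t * ‖u‖ + (1 - t) * ‖v‖ := by
  refine (norm_add_le _ _).trans_eq ?_
  rw [norm_smul, norm_smul, Real.norm_of_nonneg ht.1, Real.norm_of_nonneg (sub_nonneg.2 ht.2)]

lemma norm_sub_le_of_norm_sub_fixedPoint_le {X : Type*} [NormedAddCommGroup X] {T f : X → X}
    {ρ : ℝ} {p : X} (hT : ∀ x y, ‖T x - T y‖ ≤ ‖x - y‖) (hρ : 0 ≤ ρ)
    (hf : ∀ x y, ‖f x - f y‖ ≤ ρ * ‖x - y‖) (hp : T p = p) {M : ℝ} {y : X}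
    (hy : ‖y - p‖ ≤ M) :
    ‖f y - T y‖ ≤ (1 + ρ) * M + ‖f p - p‖ := calc
  ‖f y - T y‖ = ‖(f y - f p) + (f p - p) + (T p - T y)‖ := by rw [hp]; abel_nf
  _ ≤ ‖f y - f p‖ + ‖f p - p‖ + ‖T p - T y‖ := norm_add₃_le
  _ ≤ ρ * ‖y - p‖ + ‖f p - p‖ + ‖y - p‖ := by
      rw [norm_sub_rev (T p)]
      gcongr
      · exact hf _ _
      · exact hT _ _
  _ ≤ (1 + ρ) * M + ‖f p - p‖ := by nlinarith [norm_nonneg (y - p)]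

section SequentialAveraging

variable {X : Type*} [NormedAddCommGroup X] [NormedSpace ℝ X] {T f : X → X} {ρ : ℝ}
  {p : X} {δ : ℕ → ℝ} {x : ℕ → X}

lemma norm_sub_fixedPoint_le_max (hT : ∀ x y, ‖T x - T y‖ ≤ ‖x - y‖) (hρ : 0 ≤ ρ) (hρ1 : ρ < 1)
    (hf : ∀ x y, ‖f x - f y‖ ≤ ρ * ‖x - y‖) (hp : T p = p)
    (hδ : ∀ n, δ n ∈ Set.Icc (0 : ℝ) 1)
    (hx : ∀ n, x (n + 1) = δ n • f (x n) + (1 - δ n) • T (x n)) (n : ℕ) :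
    ‖x n - p‖ ≤ max ‖x 0 - p‖ (‖f p - p‖ / (1 - ρ)) := by
  set M := max ‖x 0 - p‖ (‖f p - p‖ / (1 - ρ))
  have hfp : ‖f p - p‖ ≤ (1 - ρ) * M := by
    rw [← div_le_iff₀' (sub_pos.2 hρ1)]
    exact le_max_right _ _
  induction n with
  | zero => exact le_max_left _ _
  | succ n ih =>
    have hTx : ‖T (x n) - p‖ ≤ M := by
      simpa only [hp] using (hT (x n) p).trans ih
    have hfx : ‖f (x n) - p‖ ≤ M := calc
      ‖f (x n) - p‖ ≤ ‖f (x n) - f p‖ + ‖f p - p‖ := norm_sub_le_norm_sub_add_norm_sub _ _ _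
      _ ≤ ρ * M + (1 - ρ) * M := add_le_add ((hf _ _).trans (by gcongr)) hfp
      _ = M := by ring
    have hsplit : x (n + 1) - p = δ n • (f (x n) - p) + (1 - δ n) • (T (x n) - p) := by
      rw [hx n]; module
    calc ‖x (n + 1) - p‖ ≤ δ n * ‖f (x n) - p‖ + (1 - δ n) * ‖T (x n) - p‖ :=
          hsplit ▸ norm_smul_add_one_sub_smul_le (hδ n) _ _
      _ ≤ δ n * M + (1 - δ n) * M := by
          gcongr
          · exact (hδ n).1
          · exact sub_nonneg.2 (hδ n).2
      _ = M := by ring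

lemma norm_sub_succ_le (hT : ∀ x y, ‖T x - T y‖ ≤ ‖x - y‖)
    (hf : ∀ x y, ‖f x - f y‖ ≤ ρ * ‖x - y‖) (hδ : ∀ n, δ n ∈ Set.Icc (0 : ℝ) 1)
    (hx : ∀ n, x (n + 1) = δ n • f (x n) + (1 - δ n) • T (x n))
    {C : ℝ} (hC : ∀ n, ‖f (x n) - T (x n)‖ ≤ C) (n : ℕ) :
    ‖x (n + 2) - x (n + 1)‖ ≤
      (1 - (1 - ρ) * δ (n + 1)) * ‖x (n + 1) - x n‖ + |δ (n + 1) - δ n| * C := by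
  set t := δ (n + 1)
  have hsplit : x (n + 2) - x (n + 1) =
      t • (f (x (n + 1)) - f (x n)) + (1 - t) • (T (x (n + 1)) - T (x n))
        + (t - δ n) • (f (x n) - T (x n)) := by
    rw [hx (n + 1), hx n]; module
  calc ‖x (n + 2) - x (n + 1)‖
      ≤ t * ‖f (x (n + 1)) - f (x n)‖ + (1 - t) * ‖T (x (n + 1)) - T (x n)‖
        + |t - δ n| * ‖f (x n) - T (x n)‖ := by
        rw [hsplit, ← Real.norm_eq_abs, ← norm_smul]
        exact (norm_add_le _ _).trans (add_le_add_left (norm_smul_add_one_sub_smul_le (hδ _) _ _) _)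
    _ ≤ t * (ρ * ‖x (n + 1) - x n‖) + (1 - t) * ‖x (n + 1) - x n‖ + |t - δ n| * C := by
        have := hδ (n + 1)
        gcongr
        · exact this.1
        · exact hf _ _
        · exact sub_nonneg.2 this.2
        · exact hT _ _
        · exact hC n
    _ = (1 - (1 - ρ) * t) * ‖x (n + 1) - x n‖ + |t - δ n| * C := by ring

lemma norm_sub_apply_le (hδ : ∀ n, δ n ∈ Set.Icc (0 : ℝ) 1)
    (hx : ∀ n, x (n + 1) = δ n • f (x n) + (1 - δ n) • T (x n))
    {C : ℝ} (hC : ∀ n, ‖f (x n) - T (x n)‖ ≤ C) (n : ℕ) :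
    ‖x n - T (x n)‖ ≤ ‖x (n + 1) - x n‖ + δ n * C := by
  have hstep : x (n + 1) - T (x n) = δ n • (f (x n) - T (x n)) := by
    rw [hx n]; module
  calc ‖x n - T (x n)‖ ≤ ‖x n - x (n + 1)‖ + ‖x (n + 1) - T (x n)‖ :=
        norm_sub_le_norm_sub_add_norm_sub _ _ _
    _ ≤ ‖x (n + 1) - x n‖ + δ n * C := by
        rw [norm_sub_rev, hstep, norm_smul, Real.norm_of_nonneg (hδ n).1]
        gcongr
        exacts [(hδ n).1, hC n]

end SequentialAveraging

theorem stmt_19 {X : Type*} [NormedAddCommGroup X] [NormedSpace ℝ X]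
    (T f : X → X) (hT : ∀ x y, ‖T x - T y‖ ≤ ‖x - y‖)
    (ρ : ℝ) (hρ : 0 ≤ ρ) (hρ1 : ρ < 1)
    (hf : ∀ x y, ‖f x - f y‖ ≤ ρ * ‖x - y‖)
    (p : X) (hp : T p = p)
    (δ : ℕ → ℝ) (hδ : ∀ n, δ n ∈ Set.Icc (0:ℝ) 1)
    (x : ℕ → X)
    (hx : ∀ n, x (n + 1) = δ n • f (x n) + (1 - δ n) • T (x n))
    (hδdiff : Summable (fun n => |δ n - δ (n + 1)|))
    (hδ0 : Filter.Tendsto δ Filter.atTop (nhds 0))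
    (hδdiv : ¬ Summable δ) :
    Filter.Tendsto (fun n => ‖x (n + 1) - x n‖) Filter.atTop (nhds 0) ∧
    Filter.Tendsto (fun n => ‖x n - T (x n)‖) Filter.atTop (nhds 0) := by
  set M := max ‖x 0 - p‖ (‖f p - p‖ / (1 - ρ))
  set C := (1 + ρ) * M + ‖f p - p‖
  have hC : ∀ n, ‖f (x n) - T (x n)‖ ≤ C := fun n =>
    norm_sub_le_of_norm_sub_fixedPoint_le hT hρ hf hp
      (norm_sub_fixedPoint_le_max hT hρ hρ1 hf hp hδ hx n)
  have hC0 : 0 ≤ C := (norm_nonneg _).trans (hC 0)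
  have hstep : Tendsto (fun n => ‖x (n + 1) - x n‖) atTop (𝓝 0) := by
    refine tendsto_zero_of_le_one_sub_mul_add (fun n => norm_nonneg _)
      (fun n => mul_nonneg (abs_nonneg _) hC0) (fun n => mul_nonneg (by linarith) (hδ _).1)
      (fun n => ?_) (norm_sub_succ_le hT hf hδ hx hC)
      ((hδdiff.congr fun n => abs_sub_comm _ _).mul_right C) ?_
    · nlinarith [(hδ (n + 1)).1, (hδ (n + 1)).2]
    · rw [summable_mul_left_iff (sub_pos.2 hρ1).ne', summable_nat_add_iff 1]
      exact hδdiv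
  refine ⟨hstep, squeeze_zero (fun n => norm_nonneg _) (norm_sub_apply_le hδ hx hC) ?_⟩
  simpa using hstep.add (hδ0.mul_const C)
end
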